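/- Let X be an N×N real random matrix that is almost surely symmetric positive semidefinite, with ordered eigenvalues λ₁(X) ≥ λ₂(X) ≥ ⋯ ≥ 0, and fix α > 0. Assume there exist constants c > 0 and t₀ > 0 such that P(λ₁(X) > t) ≥ c·t^{−α} for all t ≥ t₀, and that E[(λ₁(X)·λ₂(X))^{α/2}] < ∞. Then P(λ₂(X) > t) / P(λ₁(X) > t) → 0 as t → ∞. -/

import Mathlib

open MeasureTheory ProbabilityTheory Matrix Filter
open scoped ENNReal Topology

noncomputable section

/-- The space of `N × N` real matrices. -/
abbrev Mat (N : ℕ) := Matrix (Fin N) (Fin N) ℝ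

instance (N : ℕ) : MeasurableSpace (Mat N) :=
  inferInstanceAs (MeasurableSpace (Fin N → Fin N → ℝ))

instance (N : ℕ) : BorelSpace (Mat N) :=
  inferInstanceAs (BorelSpace (Fin N → Fin N → ℝ))

open scoped Classical in
/-- The eigenvalues of a matrix (junk value `0` if the matrix is not symmetric). -/
def eigs {N : ℕ} (s : Mat N) : Fin N → ℝ :=
  if h : s.IsHermitian then h.eigenvalues else fun _ => 0

/-- The largest eigenvalue of a symmetric matrix. -/
def lambdaMax {N : ℕ} (s : Mat N) : ℝ := ⨆ i, eigs s i

/-- The eigenvalues of a symmetric matrix in nonincreasing order: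
`eigDesc s k` is the `(k+1)`-th largest eigenvalue `λ_{k+1}(s)`. -/
def eigDesc {N : ℕ} (s : Mat N) (k : Fin N) : ℝ :=
  (eigs s ∘ Tuple.sort (eigs s)) k.rev

open scoped Classical in
/-- The positive semidefinite square root of a positive semidefinite matrix
(junk value `0` otherwise). -/
def msqrt {N : ℕ} (a : Mat N) : Mat N :=
  if h : a.PosSemidef then
    (h.1.eigenvectorUnitary : Mat N) * diagonal ((↑) ∘ (Real.sqrt ∘ h.1.eigenvalues)) *
      (star h.1.eigenvectorUnitary : Mat N)
  else 0

/-- `log⁺ x = max (log x) 0`. -/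
def logPlus (x : ℝ) : ℝ := max (Real.log x) 0

/-- The expectation of a (not necessarily integrable) real random variable, with values in
`[-∞, +∞]`: the difference of the lower integrals of the positive and negative parts. -/
def sInt {Ω : Type*} [MeasurableSpace Ω] (P : Measure Ω) (f : Ω → ℝ) : EReal :=
  ((∫⁻ ω, ENNReal.ofReal (f ω) ∂P : ℝ≥0∞) : EReal) -
    ((∫⁻ ω, ENNReal.ofReal (-f ω) ∂P : ℝ≥0∞) : EReal)

/-- `leftProd A n = A₁ ⋯ A_n` (`0`-indexed: `A 0 * A 1 * ⋯ * A (n-1)`). -/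
def leftProd {Ω : Type*} {N : ℕ} (A : ℕ → Ω → Mat N) : ℕ → Ω → Mat N
  | 0 => fun _ => 1
  | n + 1 => fun ω => leftProd A n ω * A n ω

/-- The top Lyapunov exponent
`γ = inf_{n ≥ 1} (1/n) E[log λ_max(A₁ ⋯ A_n A_nᵀ ⋯ A₁ᵀ)]`, a value in `[-∞, +∞)`. -/
def lyap {Ω : Type*} [MeasurableSpace Ω] {N : ℕ} (P : Measure Ω) (A : ℕ → Ω → Mat N) : EReal :=
  ⨅ n : ℕ, (((1 : ℝ) / (n + 1) : ℝ) : EReal) *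
    sInt P (fun ω => Real.log (lambdaMax (leftProd A (n + 1) ω * (leftProd A (n + 1) ω)ᵀ)))

/-- The `k × k` leading principal submatrix. -/
def subK {N k : ℕ} (hk : k ≤ N) (x : Mat N) : Mat k :=
  x.submatrix (Fin.castLE hk) (Fin.castLE hk)

end

/-!
On the event `λ₂(X) > t` we have `λ₁(X) λ₂(X) > t²`, so Markov's inequality restricted to the
tail gives `t^α P(λ₂(X) > t) ≤ ∫_{G ≥ t^α} G → 0` for the integrable `G = (λ₁(X) λ₂(X))^{α/2}`,
whereas `t^α P(λ₁(X) > t) ≥ c`.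

The only technical point is the measurability of `λ₁ λ₂` as a function of the matrix. Since
`(tr s^k)² - tr s^{2k} = ∑_{i ≠ j} (λᵢ λⱼ)^k`, on positive semidefinite matrices `λ₁ λ₂` is the
pointwise limit of the continuous functions `((tr s^k)² - tr s^{2k})^{1/k}`.
-/

theorem Finset.sq_sum_sub_sum_sq {ι R : Type*} [DecidableEq ι] [CommRing R] (s : Finset ι)
    (a : ι → R) :
    (∑ i ∈ s, a i) ^ 2 - ∑ i ∈ s, a i ^ 2 = ∑ p ∈ s.offDiag, a p.1 * a p.2 := by
  rw [sq, Finset.sum_mul_sum, ← Finset.sum_product', ← Finset.diag_union_offDiag,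
    Finset.sum_union (Finset.disjoint_diag_offDiag _), Finset.sum_diag]
  simp only [sq, add_sub_cancel_left]

theorem tendsto_sum_pow_rpow_inv_of_isGreatest {ι : Type*} {s : Finset ι} {f : ι → ℝ}
    (hf : ∀ i ∈ s, 0 ≤ f i) {M : ℝ} (hM : IsGreatest (f '' s) M) :
    Tendsto (fun k : ℕ => (∑ i ∈ s, f i ^ k) ^ (k⁻¹ : ℝ)) atTop (𝓝 M) := by
  obtain ⟨⟨i₀, hi₀, rfl⟩, hle⟩ := hM
  have hM₀ : 0 ≤ f i₀ := hf i₀ hi₀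
  have hcard : Tendsto (fun k : ℕ => (s.card : ℝ) ^ (k⁻¹ : ℝ)) atTop (𝓝 1) := by
    simpa using tendsto_const_nhds.rpow (tendsto_inv_atTop_zero.comp tendsto_natCast_atTop_atTop)
      (Or.inl (Nat.cast_ne_zero.2 (Finset.card_ne_zero_of_mem hi₀)))
  refine tendsto_of_tendsto_of_tendsto_of_le_of_le' tendsto_const_nhds
    (by simpa using hcard.mul_const (f i₀)) ?_ ?_
  all_goals filter_upwards [eventually_ne_atTop 0] with k hk
  · calc f i₀ = (f i₀ ^ k) ^ (k⁻¹ : ℝ) := (Real.pow_rpow_inv_natCast hM₀ hk).symm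
      _ ≤ (∑ i ∈ s, f i ^ k) ^ (k⁻¹ : ℝ) := by
        gcongr
        exact Finset.single_le_sum (fun i hi => pow_nonneg (hf i hi) k) hi₀
  · calc (∑ i ∈ s, f i ^ k) ^ (k⁻¹ : ℝ) ≤ (s.card * f i₀ ^ k) ^ (k⁻¹ : ℝ) := by
          gcongr
          · exact Finset.sum_nonneg fun i hi => pow_nonneg (hf i hi) k
          · exact Finset.sum_le_card_nsmul _ _ _ (fun i hi => pow_le_pow_left₀ (hf i hi)
              (hle ⟨i, hi, rfl⟩) k) |>.trans_eq (nsmul_eq_mul _ _)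
      _ = (s.card : ℝ) ^ (k⁻¹ : ℝ) * f i₀ := by
        rw [Real.mul_rpow (by positivity) (by positivity), Real.pow_rpow_inv_natCast hM₀ hk]

theorem Matrix.IsHermitian.trace_pow_eq_sum_eigenvalues_pow {n 𝕜 : Type*} [Fintype n]
    [DecidableEq n] [RCLike 𝕜] {A : Matrix n n 𝕜} (hA : A.IsHermitian) (k : ℕ) :
    (A ^ k).trace = ∑ i, ((hA.eigenvalues i ^ k : ℝ) : 𝕜) := by
  conv_lhs => rw [hA.spectral_theorem, ← map_pow, Unitary.conjStarAlgAut_apply, trace_mul_cycle,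
    Unitary.coe_star_mul_self, one_mul, diagonal_pow, trace_diagonal]
  simp

theorem Matrix.IsHermitian.sq_trace_pow_sub_trace_pow_two_mul {n : Type*} [Fintype n]
    [DecidableEq n] {A : Matrix n n ℝ} (hA : A.IsHermitian) (k : ℕ) :
    (A ^ k).trace ^ 2 - (A ^ (2 * k)).trace =
      ∑ p ∈ Finset.univ.offDiag, (hA.eigenvalues p.1 * hA.eigenvalues p.2) ^ k := by
  rw [hA.trace_pow_eq_sum_eigenvalues_pow, hA.trace_pow_eq_sum_eigenvalues_pow]
  simp only [RCLike.ofReal_real_eq_id, id, pow_mul', mul_pow, Finset.sq_sum_sub_sum_sq]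

/-- `Tuple.sort f` sorts `f` increasingly, so `Fin.rev 0` and `Fin.rev 1` are the positions of
its two largest values. -/
theorem isGreatest_mul_sort_rev {N : ℕ} (hN : 2 ≤ N) {f : Fin N → ℝ} (hf : 0 ≤ f) :
    IsGreatest
      ((fun p : Fin N × Fin N => f p.1 * f p.2) '' ↑(Finset.univ.offDiag : Finset (Fin N × Fin N)))
      (f (Tuple.sort f (Fin.rev ⟨0, Nat.zero_lt_of_lt hN⟩)) *
        f (Tuple.sort f (Fin.rev ⟨1, hN⟩))) := by
  set σ := Tuple.sort f
  have hmono : Monotone (f ∘ σ) := Tuple.monotone_sort f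
  refine ⟨⟨(σ _, σ _), by simp [σ.injective.eq_iff, Fin.ext_iff]; omega, rfl⟩, ?_⟩
  rintro _ ⟨⟨i, j⟩, hij, rfl⟩
  obtain ⟨i, rfl⟩ := σ.surjective i
  obtain ⟨j, rfl⟩ := σ.surjective j
  simp only [Finset.coe_offDiag, Finset.coe_univ, Set.offDiag_univ, Set.mem_compl_iff,
    Set.mem_diagonal_iff, σ.injective.eq_iff] at hij
  change f (σ i) * f (σ j) ≤ _
  wlog hlt : i < j generalizing i j
  · rw [mul_comm (f (σ i))]
    exact this j i (Ne.symm hij) (lt_of_le_of_ne (not_lt.1 hlt) (Ne.symm hij))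
  have hj := j.isLt
  exact (mul_le_mul (hmono (by simp only [Fin.le_def, Fin.val_rev]; omega))
    (hmono (by simp only [Fin.le_def, Fin.val_rev]; omega)) (hf _) (hf _)).trans_eq (mul_comm _ _)

theorem Real.rpow_le_mul_rpow_div_two {t a b α : ℝ} (ht : 0 ≤ t) (hα : 0 ≤ α) (htb : t ≤ b)
    (hba : b ≤ a) : t ^ α ≤ (a * b) ^ (α / 2) := by
  calc t ^ α = (t * t) ^ (α / 2) := by
        rw [← sq, ← Real.rpow_two, ← Real.rpow_mul ht]; ring_nf
    _ ≤ (a * b) ^ (α / 2) := by gcongr <;> linarith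

theorem tendsto_mul_meas_ge_of_lintegral_ne_top {α : Type*} [MeasurableSpace α] {μ : Measure α}
    {f : α → ℝ≥0∞} (hf : AEMeasurable f μ) (hint : ∫⁻ x, f x ∂μ ≠ ∞) :
    Tendsto (fun a : ℝ≥0∞ => a * μ {x | a ≤ f x}) (𝓝 ∞) (𝓝 0) := by
  have hmeas : Tendsto (fun a : ℝ≥0∞ => μ {x | a ≤ f x}) (𝓝 ∞) (𝓝 0) := by
    have hdiv : Tendsto (fun a : ℝ≥0∞ => (∫⁻ x, f x ∂μ) / a) (𝓝 ∞) (𝓝 0) := by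
      simpa using ENNReal.Tendsto.const_div (tendsto_id (x := 𝓝 ∞)) (Or.inr hint)
    refine tendsto_of_tendsto_of_tendsto_of_le_of_le' tendsto_const_nhds hdiv
      (Eventually.of_forall fun _ => zero_le) ?_
    filter_upwards [eventually_ne_nhds ENNReal.top_ne_zero] with a ha
    rw [ENNReal.le_div_iff_mul_le (Or.inl ha) (Or.inr hint), mul_comm]
    exact mul_meas_ge_le_lintegral₀ hf a
  refine tendsto_of_tendsto_of_tendsto_of_le_of_le tendsto_const_nhds
    (tendsto_setLIntegral_zero hint hmeas) (fun _ => zero_le) fun a => ?_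
  calc a * μ {x | a ≤ f x} = ∫⁻ _ in {x | a ≤ f x}, a ∂μ := (setLIntegral_const _ _).symm
    _ ≤ ∫⁻ x in {x | a ≤ f x}, f x ∂μ :=
      setLIntegral_mono_ae hf.restrict (ae_of_all _ fun _ hx => hx)

theorem eigDesc_antitone {N : ℕ} (s : Mat N) : Antitone (eigDesc s) :=
  fun _ _ h => Tuple.monotone_sort (eigs s) (Fin.rev_le_rev.2 h)

theorem eigs_eq_eigenvalues {N : ℕ} {s : Mat N} (hs : s.IsHermitian) : eigs s = hs.eigenvalues :=
  dif_pos hs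

theorem tendsto_sq_trace_pow_sub_rpow_eigDesc_mul {N : ℕ} (hN : 2 ≤ N) {s : Mat N}
    (hs : s.PosSemidef) :
    Tendsto (fun k : ℕ => ((s ^ k).trace ^ 2 - (s ^ (2 * k)).trace) ^ (k⁻¹ : ℝ)) atTop
      (𝓝 (eigDesc s ⟨0, Nat.zero_lt_of_lt hN⟩ * eigDesc s ⟨1, hN⟩)) := by
  have hnonneg : 0 ≤ eigs s := by rw [eigs_eq_eigenvalues hs.1]; exact hs.eigenvalues_nonneg
  simp only [hs.1.sq_trace_pow_sub_trace_pow_two_mul, ← eigs_eq_eigenvalues hs.1]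
  exact tendsto_sum_pow_rpow_inv_of_isGreatest (fun _ _ => mul_nonneg (hnonneg _) (hnonneg _))
    (isGreatest_mul_sort_rev hN hnonneg)

theorem aemeasurable_eigDesc_mul {N : ℕ} (hN : 2 ≤ N) {Ω : Type*} [MeasurableSpace Ω]
    {P : Measure Ω} {X : Ω → Mat N} (hX : Measurable X) (hXpsd : ∀ᵐ ω ∂P, (X ω).PosSemidef) :
    AEMeasurable (fun ω => eigDesc (X ω) ⟨0, Nat.zero_lt_of_lt hN⟩ * eigDesc (X ω) ⟨1, hN⟩) P := by
  refine aemeasurable_of_tendsto_metrizable_ae' (fun k => ?_)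
    (hXpsd.mono fun ω hω => tendsto_sq_trace_pow_sub_rpow_eigDesc_mul hN hω)
  have hcont : Continuous fun s : Mat N => (s ^ k).trace ^ 2 - (s ^ (2 * k)).trace := by fun_prop
  exact ((hcont.measurable.comp hX).pow_const _).aemeasurable

/-- If `P(λ₁(X) > t) ≥ c t^{-α}` for all `t ≥ t₀` and
`E[(λ₁(X) λ₂(X))^{α/2}] < ∞`, then `P(λ₂(X) > t) = o(P(λ₁(X) > t))` as `t → ∞`. -/
theorem lambda2_tail_littleO
    {N : ℕ} (hN : 2 ≤ N)
    {Ω : Type*} [MeasurableSpace Ω] (P : Measure Ω) [IsProbabilityMeasure P]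
    (X : Ω → Mat N) (hX : Measurable X)
    (hXpsd : ∀ᵐ ω ∂P, (X ω).PosSemidef)
    (α : ℝ) (hα : 0 < α) (c : ℝ) (hc : 0 < c) (t₀ : ℝ)
    (hlow : ∀ t : ℝ, t₀ ≤ t →
      c * t ^ (-α) ≤ (P {ω | t < eigDesc (X ω) ⟨0, by omega⟩}).toReal)
    (hmom : ∫⁻ ω, ENNReal.ofReal
        ((eigDesc (X ω) ⟨0, by omega⟩ * eigDesc (X ω) ⟨1, by omega⟩) ^ (α / 2)) ∂P < ⊤) :
    Tendsto (fun t : ℝ =>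
        (P {ω | t < eigDesc (X ω) ⟨1, by omega⟩}).toReal /
        (P {ω | t < eigDesc (X ω) ⟨0, by omega⟩}).toReal) atTop (𝓝 0) := by
  set G : Ω → ℝ≥0∞ := fun ω => ENNReal.ofReal
    ((eigDesc (X ω) ⟨0, by omega⟩ * eigDesc (X ω) ⟨1, by omega⟩) ^ (α / 2))
  have hG : AEMeasurable G P := ((aemeasurable_eigDesc_mul hN hX hXpsd).pow_const _).ennreal_ofReal
  have htail : Tendsto (fun t : ℝ => t ^ α * (P {ω | ENNReal.ofReal (t ^ α) ≤ G ω}).toReal)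
      atTop (𝓝 0) := by
    refine ((ENNReal.tendsto_toReal ENNReal.zero_ne_top).comp
      ((tendsto_mul_meas_ge_of_lintegral_ne_top hG hmom.ne).comp
        (ENNReal.tendsto_ofReal_atTop.comp (tendsto_rpow_atTop hα)))).congr' ?_
    filter_upwards [eventually_ge_atTop 0] with t ht
    simp [ENNReal.toReal_ofReal (Real.rpow_nonneg ht α)]
  refine squeeze_zero' (Eventually.of_forall fun t => by positivity) ?_
    (by simpa using htail.div_const c)
  filter_upwards [eventually_ge_atTop t₀, eventually_gt_atTop 0] with t ht₀t ht
  have hsub : P {ω | t < eigDesc (X ω) ⟨1, by omega⟩} ≤ P {ω | ENNReal.ofReal (t ^ α) ≤ G ω} :=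
    measure_mono fun ω hω => ENNReal.ofReal_le_ofReal <| Real.rpow_le_mul_rpow_div_two ht.le
      hα.le (le_of_lt hω) (eigDesc_antitone _ (by simp [Fin.le_def]))
  calc _ ≤ (P {ω | t < eigDesc (X ω) ⟨1, by omega⟩}).toReal / (c * t ^ (-α)) :=
        div_le_div_of_nonneg_left ENNReal.toReal_nonneg (by positivity) (hlow t ht₀t)
    _ = t ^ α * (P {ω | t < eigDesc (X ω) ⟨1, by omega⟩}).toReal / c := by
        rw [Real.rpow_neg ht.le]; field_simp
    _ ≤ t ^ α * (P {ω | ENNReal.ofReal (t ^ α) ≤ G ω}).toReal / c := by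
        gcongr t ^ α * ?_ / c
        exact ENNReal.toReal_mono (measure_ne_top _ _) hsub
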